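/- arXiv:1004.4262 — 5 statements merged into one kernel-verified Lean document; each statement's English description precedes it below -/
import Mathlib

section
/- Let H be a real Hilbert space and G : H → H a bounded linear operator with adjoint G*, and set S := -(G + G*)/2. Let f ∈ H, let λ, λ' > 0, and suppose u, u' ∈ H satisfy the resolvent equations λ·u - G u = f and λ'·u' - G u' = f. Then (λ + λ')⟨u, u'⟩ = ⟨S(u - u'), u - u'⟩ + λ‖u‖² + λ'‖u'‖². -/
/-!
Only the symmetric part of `G` is seen by the quadratic form, so `⟪S x, x⟫ = -⟪G x, x⟫`.
Subtracting the two resolvent equations eliminates `f`: `G (u - u') = λ u - λ' u'`, and expanding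
`⟪λ u - λ' u', u - u'⟫` gives the identity.
-/

open scoped RealInnerProductSpace

section

variable {H : Type*} [NormedAddCommGroup H] [InnerProductSpace ℝ H]

theorem real_inner_smul_sub_smul_sub_self (u u' : H) (l l' : ℝ) :
    ⟪l • u - l' • u', u - u'⟫ = l * ‖u‖ ^ 2 + l' * ‖u'‖ ^ 2 - (l + l') * ⟪u, u'⟫ := by
  simp only [inner_sub_left, inner_sub_right, real_inner_smul_left, real_inner_comm u' u,
    real_inner_self_eq_norm_sq]
  ring

theorem real_inner_neg_half_add_adjoint_apply_self [CompleteSpace H] (G : H →L[ℝ] H) (x : H) :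
    ⟪(-(2 : ℝ)⁻¹ • (G + ContinuousLinearMap.adjoint G)) x, x⟫ = -⟪G x, x⟫ := by
  rw [smul_apply, add_apply, real_inner_smul_left, inner_add_left,
    ContinuousLinearMap.adjoint_inner_left, real_inner_comm x]
  ring

end

theorem stmt_0_general
    {H : Type*} [NormedAddCommGroup H] [InnerProductSpace ℝ H] [CompleteSpace H]
    (G : H →L[ℝ] H) (S : H →L[ℝ] H)
    (hS : S = -(2 : ℝ)⁻¹ • (G + ContinuousLinearMap.adjoint G))
    (f u u' : H) (l l' : ℝ)
    (hu : l • u - G u = f) (hu' : l' • u' - G u' = f) :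
    (l + l') * ⟪u, u'⟫
      = ⟪S (u - u'), u - u'⟫ + l * ‖u‖ ^ 2 + l' * ‖u'‖ ^ 2 := by
  have hG_sub : G (u - u') = l • u - l' • u' := by
    rw [map_sub]
    exact (sub_eq_sub_iff_sub_eq_sub.mp (hu.trans hu'.symm)).symm
  rw [hS, real_inner_neg_half_add_adjoint_apply_self, hG_sub, real_inner_smul_sub_smul_sub_self]
  ring

theorem stmt_0
    {H : Type*} [NormedAddCommGroup H] [InnerProductSpace ℝ H] [CompleteSpace H]
    (G : H →L[ℝ] H) (S : H →L[ℝ] H)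
    (hS : S = -(2 : ℝ)⁻¹ • (G + ContinuousLinearMap.adjoint G))
    (f u u' : H) (l l' : ℝ) (hl : 0 < l) (hl' : 0 < l')
    (hu : l • u - G u = f) (hu' : l' • u' - G u' = f) :
    (l + l') * ⟪u, u'⟫
      = ⟪S (u - u'), u - u'⟫ + l * ‖u‖ ^ 2 + l' * ‖u'‖ ^ 2 :=
  stmt_0_general G S hS f u u' l l' hu hu'
end

section
/- Let d ≥ 3 be an integer, k ∈ {1,…,d}, and for p = (p_1,…,p_d) ∈ ℝ^d define D̂(p) := ∑_{l=1}^d (1 - cos p_l). Then there exists a finite constant C such that for every q ∈ ℝ^d, ∫_{[-π,π]^d} (1 - cos p_k)/(D̂(p) · D̂(p+q)) dp ≤ C, where the integrand is defined to be 0 on the Lebesgue-null set where D̂(p)·D̂(p+q) = 0. -/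
/-!
Since `1 - cos p_k ≤ D̂(p)`, the integrand is at most `D̂(p + q)⁻¹`. Being `2π`-periodic in every
coordinate, `D̂` is a function on the torus `(ℝ / 2πℤ)^d`, so by translation invariance of Haar
measure the integral of `D̂(p + q)⁻¹` over the cube does not depend on `q`. Finally
`1 - cos x ≥ 2x²/π²` on `[-π, π]` gives `D̂(p)⁻¹ ≤ (π²/2) ‖p‖⁻²` on the cube, which is integrable
near `0` because `d ≥ 3 > 2`.
-/

open MeasureTheory Real Set

noncomputable section

variable {ι : Type*} [Fintype ι]

def laplacianSymbol (p : ι → ℝ) : ℝ := ∑ l, (1 - cos (p l))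

theorem laplacianSymbol_nonneg (p : ι → ℝ) : 0 ≤ laplacianSymbol p :=
  Finset.sum_nonneg fun l _ => sub_nonneg.2 (cos_le_one (p l))

theorem one_sub_cos_le_laplacianSymbol (p : ι → ℝ) (k : ι) :
    1 - cos (p k) ≤ laplacianSymbol p :=
  Finset.single_le_sum (fun l _ => sub_nonneg.2 (cos_le_one (p l))) (Finset.mem_univ k)

theorem continuous_laplacianSymbol : Continuous (laplacianSymbol : (ι → ℝ) → ℝ) :=
  continuous_finsetSum _ fun l _ => by fun_prop

theorem one_sub_cos_div_le_inv_laplacianSymbol (p r : ι → ℝ) (k : ι) :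
    (1 - cos (p k)) / (laplacianSymbol p * laplacianSymbol r) ≤ (laplacianSymbol r)⁻¹ := by
  rcases (laplacianSymbol_nonneg p).eq_or_lt with h0 | hpos
  · simp [← h0, laplacianSymbol_nonneg]
  calc _ ≤ laplacianSymbol p / (laplacianSymbol p * laplacianSymbol r) :=
        div_le_div_of_nonneg_right (one_sub_cos_le_laplacianSymbol p k)
          (mul_nonneg hpos.le (laplacianSymbol_nonneg r))
    _ = (laplacianSymbol r)⁻¹ := div_mul_cancel_left₀ hpos.ne' _

theorem norm_sq_le_laplacianSymbol {p : ι → ℝ} (hp : p ∈ Icc (fun _ => -π) fun _ => π) :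
    ‖p‖ ^ 2 ≤ π ^ 2 / 2 * laplacianSymbol p := by
  have hcoord (i : ι) : p i ^ 2 ≤ π ^ 2 / 2 * laplacianSymbol p := by
    have hcos := cos_le_one_sub_mul_cos_sq (abs_le.2 ⟨hp.1 i, hp.2 i⟩)
    have h2 : 2 / π ^ 2 * p i ^ 2 ≤ laplacianSymbol p := by
      linarith [one_sub_cos_le_laplacianSymbol p i]
    rw [div_mul_eq_mul_div, div_le_iff₀ (by positivity)] at h2
    linarith
  have hnorm : ‖p‖ ≤ √(π ^ 2 / 2 * laplacianSymbol p) :=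
    (pi_norm_le_iff_of_nonneg (sqrt_nonneg _)).2 fun i => abs_le_sqrt (hcoord i)
  calc ‖p‖ ^ 2 ≤ √(π ^ 2 / 2 * laplacianSymbol p) ^ 2 := by gcongr
    _ = π ^ 2 / 2 * laplacianSymbol p := sq_sqrt (by positivity [laplacianSymbol_nonneg p])

theorem inv_laplacianSymbol_le {p : ι → ℝ} (hp : p ∈ Icc (fun _ => -π) fun _ => π) :
    (laplacianSymbol p)⁻¹ ≤ π ^ 2 / 2 * ‖p‖ ^ (-2 : ℝ) := by
  rcases (norm_nonneg p).eq_or_lt with h0 | hpos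
  · have : p = 0 := norm_eq_zero.1 h0.symm
    simp [this, laplacianSymbol]
  have hsq := norm_sq_le_laplacianSymbol hp
  rw [rpow_neg (norm_nonneg p), rpow_two, ← div_eq_mul_inv,
    inv_le_comm₀ (by nlinarith [pi_pos]) (by positivity), inv_div, div_le_iff₀ (by positivity)]
  linarith

theorem integrableOn_inv_laplacianSymbol (hι : 3 ≤ Fintype.card ι) :
    IntegrableOn (fun p : ι → ℝ => (laplacianSymbol p)⁻¹) (Icc (fun _ => -π) fun _ => π) := by
  set cube : Set (ι → ℝ) := Icc (fun _ => -π) fun _ => π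
  have hdim : Module.finrank ℝ (ι → ℝ) = Fintype.card ι := Module.finrank_fintype_fun_eq_card ℝ
  have hcube : cube ⊆ Metric.ball 0 4 := fun p hp => by
    refine mem_ball_zero_iff.2 (lt_of_le_of_lt ((pi_norm_le_iff_of_nonneg pi_pos.le).2 fun i => ?_)
      pi_lt_four)
    exact abs_le.2 ⟨hp.1 i, hp.2 i⟩
  have hball : IntegrableOn (cube.indicator fun p => (laplacianSymbol p)⁻¹) (Metric.ball 0 4) := by
    refine integrableOn_ball_of_norm_le_rpow (C := π ^ 2 / 2) (α := 2) (by omega)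
      (by rw [hdim]; exact_mod_cast hι) (ae_of_all _ fun p => ?_) ?_
    · by_cases hp : p ∈ cube
      · rw [indicator_of_mem hp, norm_inv, norm_of_nonneg (laplacianSymbol_nonneg p)]
        exact inv_laplacianSymbol_le hp
      · rw [indicator_of_notMem hp, norm_zero]
        positivity
    · exact (continuous_laplacianSymbol.measurable.inv.indicator
        measurableSet_Icc).aestronglyMeasurable
  exact (hball.mono_set hcube).congr_fun (fun p hp => indicator_of_mem hp _) measurableSet_Icc

theorem setLIntegral_pi_Ioc_comp_coe {T : ℝ} [Fact (0 < T)] (a : ι → ℝ)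
    {g : (ι → AddCircle T) → ENNReal} (hg : Measurable g) :
    ∫⁻ p in univ.pi fun i => Ioc (a i) (a i + T), g (fun i => (p i : AddCircle T)) = ∫⁻ x, g x := by
  have hmk : MeasurePreserving (fun (p : ι → ℝ) i => (p i : AddCircle T))
      (volume.restrict (univ.pi fun i => Ioc (a i) (a i + T))) volume := by
    rw [volume_pi, volume_pi, Measure.restrict_pi_pi]
    exact measurePreserving_pi _ _ fun i => AddCircle.measurePreserving_mk T (a i)
  exact hmk.lintegral_comp hg

theorem setLIntegral_pi_Ioc_comp_coe_add {T : ℝ} [Fact (0 < T)] (a q : ι → ℝ)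
    {g : (ι → AddCircle T) → ENNReal} (hg : Measurable g) :
    ∫⁻ p in univ.pi fun i => Ioc (a i) (a i + T), g (fun i => ((p i + q i : ℝ) : AddCircle T)) =
      ∫⁻ p in univ.pi fun i => Ioc (a i) (a i + T), g (fun i => (p i : AddCircle T)) := by
  have hg' : Measurable fun x => g (x + fun i => (q i : AddCircle T)) :=
    hg.comp (measurable_add_const _)
  simp only [AddCircle.coe_add]
  calc _ = ∫⁻ x, g (x + fun i => (q i : AddCircle T)) := setLIntegral_pi_Ioc_comp_coe a hg'
    _ = _ := by rw [lintegral_add_right_eq_self, setLIntegral_pi_Ioc_comp_coe a hg]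

-- `Real.Angle` is by definition `AddCircle (2 * π)`.
def torusLaplacianSymbol (x : ι → AddCircle (2 * π)) : ℝ := ∑ l, (1 - Angle.cos (x l))

theorem torusLaplacianSymbol_coe (p : ι → ℝ) :
    torusLaplacianSymbol (fun l => (p l : AddCircle (2 * π))) = laplacianSymbol p :=
  Finset.sum_congr rfl fun l _ => by rw [← Angle.cos_coe (p l)]; rfl

theorem continuous_torusLaplacianSymbol :
    Continuous (torusLaplacianSymbol : (ι → AddCircle (2 * π)) → ℝ) :=
  continuous_finsetSum _ fun l _ => continuous_const.sub <|
    Angle.continuous_cos.comp (continuous_apply l)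

theorem setLIntegral_inv_laplacianSymbol_add (q : ι → ℝ) :
    ∫⁻ p in Icc (fun _ => -π) (fun _ => π), ENNReal.ofReal (laplacianSymbol (p + q))⁻¹ =
      ∫⁻ p in Icc (fun _ : ι => -π) (fun _ => π), ENNReal.ofReal (laplacianSymbol p)⁻¹ := by
  have : Fact (0 < 2 * π) := ⟨two_pi_pos⟩
  have hg : Measurable fun x : ι → AddCircle (2 * π) => ENNReal.ofReal (torusLaplacianSymbol x)⁻¹ :=
    continuous_torusLaplacianSymbol.measurable.inv.ennreal_ofReal
  have hcube : (univ.pi fun _ : ι => Ioc (-π) (-π + 2 * π)) =ᵐ[volume]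
      Icc (fun _ => -π) fun _ => π := by
    rw [show -π + 2 * π = π by ring]
    exact Measure.univ_pi_Ioc_ae_eq_Icc
  rw [← setLIntegral_congr hcube, ← setLIntegral_congr hcube]
  simp only [← torusLaplacianSymbol_coe, Pi.add_apply]
  exact setLIntegral_pi_Ioc_comp_coe_add (fun _ => -π) q hg

end

theorem stmt_6
    (d : ℕ) (hd : 3 ≤ d) (k : Fin d)
    (D : (Fin d → ℝ) → ℝ) (hD : ∀ p, D p = ∑ l, (1 - Real.cos (p l))) :
    ∃ C : ℝ, ∀ q : Fin d → ℝ,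
      (∫⁻ p in Set.Icc (fun _ : Fin d => -π) (fun _ : Fin d => π),
          ENNReal.ofReal
            (if D p * D (p + q) = 0 then 0
             else (1 - Real.cos (p k)) / (D p * D (p + q))))
        ≤ ENNReal.ofReal C := by
  obtain rfl : D = laplacianSymbol := funext hD
  refine ⟨∫ p in Icc (fun _ : Fin d => -π) (fun _ => π), (laplacianSymbol p)⁻¹, fun q => ?_⟩
  rw [ofReal_integral_eq_lintegral_ofReal
      (integrableOn_inv_laplacianSymbol (by rwa [Fintype.card_fin]))
      (ae_of_all _ fun p => inv_nonneg.2 (laplacianSymbol_nonneg p)),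
    ← setLIntegral_inv_laplacianSymbol_add q]
  refine lintegral_mono fun p => ENNReal.ofReal_le_ofReal ?_
  split_ifs
  · exact inv_nonneg.2 (laplacianSymbol_nonneg _)
  · exact one_sub_cos_div_le_inv_laplacianSymbol p (p + q) k
end

section
/- Let d ≥ 1 and n ≥ 0 be integers. Let w : ℝ^d → [0,∞] be measurable, let g : [-π,π]^d → ℂ and b : [-π,π]^d → [0,∞] be measurable, and let û : ([-π,π]^d)^n → ℂ be a measurable function that is symmetric, i.e. û(p_{σ(1)},…,p_{σ(n)}) = û(p_1,…,p_n) for every permutation σ of {1,…,n}. Then ∫_{([-π,π]^d)^{n+1}} w(∑_{m=1}^{n+1} p_m) · |∑_{m=1}^{n+1} g(p_m) û(p_1,…,p_{m-1},p_{m+1},…,p_{n+1})|² · ∏_{m=1}^{n+1} b(p_m) dp ≤ (n+1)² ∫_{([-π,π]^d)^{n+1}} w(∑_{m=1}^{n+1} p_m) · |g(p_{n+1})|² · |û(p_1,…,p_n)|² · ∏_{m=1}^{n+1} b(p_m) dp, both sides taking values in [0,∞]. -/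
/-! Pointwise, Cauchy–Schwarz bounds `‖∑ₘ cₘ‖²` by `(n + 1) ∑ₘ ‖cₘ‖²`. The `m`-th term is the
right-hand integrand composed with a permutation of the coordinates that moves the last one to
slot `m` and keeps the others in order. The weight `w (∑ pᵢ) ∏ b (pᵢ)` and the product measure on
the cube are invariant under it, so each of the `n + 1` terms integrates to the right-hand
integral. -/

open MeasureTheory Real
open scoped ENNReal

open Finset in
theorem ENNReal.coe_nnnorm_sum_sq_le_card_mul {ι E : Type*} [SeminormedAddCommGroup E]
    (s : Finset ι) (z : ι → E) :
    (‖∑ i ∈ s, z i‖₊ : ℝ≥0∞) ^ 2 ≤ #s * ∑ i ∈ s, (‖z i‖₊ : ℝ≥0∞) ^ 2 := by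
  have h : ‖∑ i ∈ s, z i‖₊ ^ 2 ≤ #s * ∑ i ∈ s, ‖z i‖₊ ^ 2 :=
    (pow_le_pow_left₀ zero_le (nnnorm_sum_le s z) 2).trans sq_sum_le_card_mul_sum_sq
  exact_mod_cast h

theorem Fin.exists_perm_last_eq_and_comp_castSucc {n : ℕ} (m : Fin (n + 1)) :
    ∃ σ : Equiv.Perm (Fin (n + 1)), σ (Fin.last n) = m ∧ σ ∘ Fin.castSucc = m.succAbove := by
  refine ⟨(finSuccEquiv' (Fin.last n)).trans (finSuccEquiv' m).symm, ?_, funext fun i => ?_⟩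
  · simp
  · simp [← Fin.succAbove_last]

theorem MeasureTheory.lintegral_comp_perm {ι α : Type*} [Fintype ι] [MeasurableSpace α]
    (μ : Measure α) [SigmaFinite μ] (σ : Equiv.Perm ι) (F : (ι → α) → ℝ≥0∞) :
    ∫⁻ p, F (p ∘ σ) ∂Measure.pi (fun _ => μ) = ∫⁻ p, F p ∂Measure.pi (fun _ => μ) :=
  (measurePreserving_arrowCongr' (fun _ => μ) (fun _ => μ) σ.symm (MeasurableEquiv.refl α)
    fun _ => MeasurePreserving.id μ).lintegral_comp_emb (MeasurableEquiv.measurableEmbedding _) F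

open Finset in
theorem MeasureTheory.lintegral_finsetSum_comp_perm {ι κ α : Type*} [Fintype ι]
    [MeasurableSpace α] (μ : Measure α) [SigmaFinite μ] (s : Finset κ) (σ : κ → Equiv.Perm ι)
    {F : (ι → α) → ℝ≥0∞} (hF : Measurable F) :
    ∫⁻ p, ∑ k ∈ s, F (p ∘ σ k) ∂Measure.pi (fun _ => μ)
      = #s * ∫⁻ p, F p ∂Measure.pi (fun _ => μ) := by
  rw [lintegral_finsetSum (f := fun k p => F (p ∘ σ k)) s fun k _ => hF.comp (by fun_prop)]
  simp only [lintegral_comp_perm, sum_const, nsmul_eq_mul]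

theorem stmt_7_general
    (d n : ℕ)
    (w : (Fin d → ℝ) → ℝ≥0∞) (hw : Measurable w)
    (g : (Fin d → ℝ) → ℂ) (hg : Measurable g)
    (b : (Fin d → ℝ) → ℝ≥0∞) (hb : Measurable b)
    (u : (Fin n → Fin d → ℝ) → ℂ) (hu : Measurable u) :
    (∫⁻ p in Set.univ.pi
        (fun _ : Fin (n + 1) => Set.Icc (fun _ : Fin d => -π) (fun _ : Fin d => π)),
      w (∑ m, p m)
        * (‖∑ m : Fin (n + 1), g (p m) * u (p ∘ m.succAbove)‖₊ : ℝ≥0∞) ^ 2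
        * ∏ m, b (p m))
      ≤ ((n + 1 : ℕ) : ℝ≥0∞) ^ 2 *
        ∫⁻ p in Set.univ.pi
          (fun _ : Fin (n + 1) => Set.Icc (fun _ : Fin d => -π) (fun _ : Fin d => π)),
        w (∑ m, p m)
          * (‖g (p (Fin.last n))‖₊ : ℝ≥0∞) ^ 2
          * (‖u (p ∘ Fin.castSucc)‖₊ : ℝ≥0∞) ^ 2
          * ∏ m, b (p m) := by
  set F : (Fin (n + 1) → Fin d → ℝ) → ℝ≥0∞ := fun p =>
    w (∑ m, p m) * (‖g (p (Fin.last n))‖₊ : ℝ≥0∞) ^ 2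
      * (‖u (p ∘ Fin.castSucc)‖₊ : ℝ≥0∞) ^ 2 * ∏ m, b (p m)
  have hF : Measurable F := by fun_prop
  choose σ hσ_last hσ_castSucc using Fin.exists_perm_last_eq_and_comp_castSucc (n := n)
  have hFσ (p : Fin (n + 1) → Fin d → ℝ) (m : Fin (n + 1)) : F (p ∘ σ m) =
      w (∑ i, p i) * (‖g (p m) * u (p ∘ m.succAbove)‖₊ : ℝ≥0∞) ^ 2 * ∏ i, b (p i) := by
    simp only [F, Function.comp_apply, hσ_last, Function.comp_assoc, hσ_castSucc,
      Equiv.sum_comp (σ m) p, Equiv.prod_comp (σ m) fun i => b (p i), nnnorm_mul,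
      ENNReal.coe_mul, mul_pow]
    ring
  have hpointwise (p : Fin (n + 1) → Fin d → ℝ) :
      w (∑ m, p m) * (‖∑ m : Fin (n + 1), g (p m) * u (p ∘ m.succAbove)‖₊ : ℝ≥0∞) ^ 2
        * ∏ m, b (p m) ≤ ((n + 1 : ℕ) : ℝ≥0∞) * ∑ m, F (p ∘ σ m) := by
    grw [ENNReal.coe_nnnorm_sum_sq_le_card_mul]
    simp only [hFσ, Finset.card_univ, Fintype.card_fin, Finset.mul_sum, Finset.sum_mul]
    exact (Finset.sum_congr rfl fun m _ => by ring).le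
  rw [volume_pi, Measure.restrict_pi_pi]
  calc _ ≤ ∫⁻ p, ((n + 1 : ℕ) : ℝ≥0∞) * ∑ m, F (p ∘ σ m)
        ∂Measure.pi fun _ => volume.restrict (Set.Icc (fun _ : Fin d => -π) fun _ => π) :=
        lintegral_mono hpointwise
    _ = _ := by
      rw [lintegral_const_mul' _ _ (ENNReal.natCast_ne_top _),
        lintegral_finsetSum_comp_perm _ _ _ hF, Finset.card_univ, Fintype.card_fin, sq, mul_assoc]

theorem stmt_7
    (d n : ℕ) (hd : 1 ≤ d)
    (w : (Fin d → ℝ) → ℝ≥0∞) (hw : Measurable w)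
    (g : (Fin d → ℝ) → ℂ) (hg : Measurable g)
    (b : (Fin d → ℝ) → ℝ≥0∞) (hb : Measurable b)
    (u : (Fin n → Fin d → ℝ) → ℂ) (hu : Measurable u)
    (hsymm : ∀ (σ : Equiv.Perm (Fin n)) (p : Fin n → Fin d → ℝ), u (p ∘ σ) = u p) :
    (∫⁻ p in Set.univ.pi
        (fun _ : Fin (n + 1) => Set.Icc (fun _ : Fin d => -π) (fun _ : Fin d => π)),
      w (∑ m, p m)
        * (‖∑ m : Fin (n + 1), g (p m) * u (p ∘ m.succAbove)‖₊ : ℝ≥0∞) ^ 2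
        * ∏ m, b (p m))
      ≤ ((n + 1 : ℕ) : ℝ≥0∞) ^ 2 *
        ∫⁻ p in Set.univ.pi
          (fun _ : Fin (n + 1) => Set.Icc (fun _ : Fin d => -π) (fun _ : Fin d => π)),
        w (∑ m, p m)
          * (‖g (p (Fin.last n))‖₊ : ℝ≥0∞) ^ 2
          * (‖u (p ∘ Fin.castSucc)‖₊ : ℝ≥0∞) ^ 2
          * ∏ m, b (p m) :=
  stmt_7_general d n w hw g hg b hb u hu
end

section
/- Let d ≥ 1 and n ≥ 0 be integers, k ∈ {1,…,d}, and for p ∈ ℝ^d define D̂(p) := ∑_{l=1}^d (1 - cos p_l). Then for every measurable function û : ([-π,π]^d)^n → ℂ, ∫_{([-π,π]^d)^{n+1}} |∑_{m=1}^{n+1} (e^{i p_m · e_k} - 1) û(p_1,…,p_{m-1},p_{m+1},…,p_{n+1})|² · ∏_{m=1}^{n+1} D̂(p_m)^{-1} dp ≤ (n+1)² · (2(2π)^d/d) · ∫_{([-π,π]^d)^n} |û(p_1,…,p_n)|² ∏_{m=1}^{n} D̂(p_m)^{-1} dp, both sides taking values in [0,∞] and integrands defined to be 0 where a factor D̂ vanishes.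 -/
/-!
By Cauchy–Schwarz, the square of the sum of the `n + 1` terms is at most `n + 1` times the sum of
their squares. In the `m`-th square the variable `p_m` separates from the others, so by Tonelli its
integral is the one-particle factor `∫ |e^{i x_k} - 1|² / D̂(x) dx` times the `n`-particle integral
of `|û|²`. Since `|e^{i t} - 1|² = 2 (1 - cos t)`, and since by symmetry of the coordinates the `d`
integrals `∫ (1 - cos x_l) / D̂(x) dx` are all equal while their sum is at most `(2π)^d`, the
one-particle factor is at most `2 (2π)^d / d`.
-/

open MeasureTheory Real Finset
open scoped ENNReal

lemma enorm_sum_sq_le_card_mul_sum_sq {ι E : Type*} [SeminormedAddCommGroup E]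
    (s : Finset ι) (f : ι → E) :
    ‖∑ i ∈ s, f i‖ₑ ^ 2 ≤ #s * ∑ i ∈ s, ‖f i‖ₑ ^ 2 := by
  have h : ‖∑ i ∈ s, f i‖ ^ 2 ≤ #s * ∑ i ∈ s, ‖f i‖ ^ 2 :=
    (pow_le_pow_left₀ (norm_nonneg _) (norm_sum_le _ _) 2).trans sq_sum_le_card_mul_sum_sq
  simp_rw [← ofReal_norm, ← ENNReal.ofReal_pow (norm_nonneg _),
    ← ENNReal.ofReal_sum_of_nonneg fun i _ => sq_nonneg ‖f i‖, ← ENNReal.ofReal_natCast,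
    ← ENNReal.ofReal_mul (Nat.cast_nonneg _)]
  exact ENNReal.ofReal_le_ofReal h

section PiMeasure

variable {α : Type*} [MeasurableSpace α] (μ : Measure α) [SigmaFinite μ]

lemma lintegral_pi_mul_comp_succAbove {n : ℕ} (m : Fin (n + 1)) {g : α → ℝ≥0∞}
    {h : (Fin n → α) → ℝ≥0∞} (hg : AEMeasurable g μ)
    (hh : AEMeasurable h (Measure.pi fun _ => μ)) :
    ∫⁻ p, g (p m) * h (p ∘ m.succAbove) ∂Measure.pi (fun _ => μ) =
      (∫⁻ x, g x ∂μ) * ∫⁻ q, h q ∂Measure.pi (fun _ => μ) := by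
  rw [← lintegral_prod_mul hg hh,
    ← (measurePreserving_piFinSuccAbove (fun _ => μ) m).lintegral_comp_emb
      (MeasurableEquiv.measurableEmbedding _)]
  rfl

lemma lintegral_pi_enorm_sum_succAbove_sq_le {n : ℕ} {e : α → ℂ} {u : (Fin n → α) → ℂ}
    {w : α → ℝ≥0∞} (he : Measurable e) (hu : Measurable u) (hw : Measurable w) :
    ∫⁻ p, ‖∑ m : Fin (n + 1), e (p m) * u (p ∘ m.succAbove)‖ₑ ^ 2 * ∏ m, w (p m)
        ∂Measure.pi (fun _ => μ)
      ≤ ((n + 1 : ℕ) : ℝ≥0∞) ^ 2 * (∫⁻ x, ‖e x‖ₑ ^ 2 * w x ∂μ) *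
        ∫⁻ q, ‖u q‖ₑ ^ 2 * ∏ m, w (q m) ∂Measure.pi (fun _ => μ) := by
  set g : α → ℝ≥0∞ := fun x => ‖e x‖ₑ ^ 2 * w x
  set h : (Fin n → α) → ℝ≥0∞ := fun q => ‖u q‖ₑ ^ 2 * ∏ m, w (q m)
  have hterm (p : Fin (n + 1) → α) (m : Fin (n + 1)) :
      ‖e (p m) * u (p ∘ m.succAbove)‖ₑ ^ 2 * ∏ j, w (p j) = g (p m) * h (p ∘ m.succAbove) := by
    simp only [g, h, enorm_mul, mul_pow, Fin.prod_univ_succAbove (fun j => w (p j)) m,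
      Function.comp_apply]
    ring
  have hg : Measurable g := by fun_prop
  have hh : Measurable h := by fun_prop
  have hgh (m : Fin (n + 1)) :
      Measurable fun p : Fin (n + 1) → α => g (p m) * h (p ∘ m.succAbove) :=
    (hg.comp (measurable_pi_apply m)).mul
      (hh.comp (measurable_pi_lambda _ fun _ => measurable_pi_apply _))
  calc ∫⁻ p, ‖∑ m : Fin (n + 1), e (p m) * u (p ∘ m.succAbove)‖ₑ ^ 2 * ∏ m, w (p m)
        ∂Measure.pi (fun _ => μ)
      ≤ ∫⁻ p, ((n + 1 : ℕ) : ℝ≥0∞) * ∑ m : Fin (n + 1), g (p m) * h (p ∘ m.succAbove)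
          ∂Measure.pi (fun _ => μ) := by
        refine lintegral_mono fun p => ?_
        simp_rw [← hterm, ← Finset.sum_mul, ← mul_assoc]
        gcongr
        simpa using enorm_sum_sq_le_card_mul_sum_sq univ
          fun m : Fin (n + 1) => e (p m) * u (p ∘ m.succAbove)
    _ = ((n + 1 : ℕ) : ℝ≥0∞) * ∑ _m : Fin (n + 1),
          (∫⁻ x, g x ∂μ) * ∫⁻ q, h q ∂Measure.pi (fun _ => μ) := by
        rw [lintegral_const_mul' _ _ (ENNReal.natCast_ne_top _),
          lintegral_finsetSum' _ fun m _ => (hgh m).aemeasurable]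
        simp_rw [lintegral_pi_mul_comp_succAbove μ _ hg.aemeasurable hh.aemeasurable]
    _ = _ := by
        rw [sum_const, card_univ, Fintype.card_fin, nsmul_eq_mul]
        ring

lemma lintegral_pi_comp_perm {ι : Type*} [Fintype ι] (σ : Equiv.Perm ι)
    (f : (ι → α) → ℝ≥0∞) :
    ∫⁻ x, f (x ∘ σ) ∂Measure.pi (fun _ => μ) = ∫⁻ x, f x ∂Measure.pi (fun _ => μ) :=
  (measurePreserving_arrowCongr' (fun _ => μ) (fun _ => μ) σ.symm (MeasurableEquiv.refl α)
    fun _ => MeasurePreserving.id μ).lintegral_comp_emb (MeasurableEquiv.measurableEmbedding _) f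

lemma sum_ofReal_mul_ofReal_inv_sum_le_one {ι : Type*} (s : Finset ι) {a : ι → ℝ}
    (ha : ∀ i ∈ s, 0 ≤ a i) :
    ∑ i ∈ s, ENNReal.ofReal (a i) * ENNReal.ofReal (∑ j ∈ s, a j)⁻¹ ≤ 1 := by
  rw [← Finset.sum_mul, ← ENNReal.ofReal_sum_of_nonneg ha,
    ← ENNReal.ofReal_mul (sum_nonneg ha)]
  exact ENNReal.ofReal_le_one.2 mul_inv_le_one

lemma lintegral_pi_ofReal_mul_ofReal_inv_sum_le {ι : Type*} [Fintype ι] {φ : α → ℝ}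
    (hφ : Measurable φ) (hφ_nonneg : ∀ x, 0 ≤ φ x) (k : ι) :
    ∫⁻ x, ENNReal.ofReal (φ (x k)) * ENNReal.ofReal (∑ l, φ (x l))⁻¹ ∂Measure.pi (fun _ => μ)
      ≤ μ Set.univ ^ Fintype.card ι / Fintype.card ι := by
  classical
  set P : Measure (ι → α) := Measure.pi fun _ => μ
  set F : ι → (ι → α) → ℝ≥0∞ :=
    fun l x => ENNReal.ofReal (φ (x l)) * ENNReal.ofReal (∑ j, φ (x j))⁻¹
  have hF_swap (l : ι) : ∫⁻ x, F l x ∂P = ∫⁻ x, F k x ∂P := by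
    rw [← lintegral_pi_comp_perm μ (Equiv.swap k l)]
    congr 1 with x
    simp only [F, Function.comp_apply, Equiv.swap_apply_right]
    rw [Equiv.sum_comp (Equiv.swap k l) fun j => φ (x j)]
  have hsum : Fintype.card ι * ∫⁻ x, F k x ∂P ≤ μ Set.univ ^ Fintype.card ι :=
    calc Fintype.card ι * ∫⁻ x, F k x ∂P
        = ∫⁻ x, ∑ l, F l x ∂P := by
          rw [lintegral_finsetSum' _ fun l _ => by fun_prop, sum_congr rfl fun l _ => hF_swap l,
            sum_const, nsmul_eq_mul, card_univ]
      _ ≤ ∫⁻ _, 1 ∂P :=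
          lintegral_mono fun x => sum_ofReal_mul_ofReal_inv_sum_le_one _ fun l _ => hφ_nonneg _
      _ = μ Set.univ ^ Fintype.card ι := by
          rw [lintegral_one, ← Set.pi_univ, Measure.pi_pi, prod_const, card_univ]
  have hcard : (Fintype.card ι : ℝ≥0∞) ≠ 0 := by
    have : Nonempty ι := ⟨k⟩
    exact_mod_cast Fintype.card_ne_zero
  rwa [ENNReal.le_div_iff_mul_le (Or.inl hcard) (Or.inl (ENNReal.natCast_ne_top _)), mul_comm]

end PiMeasure

lemma enorm_exp_I_mul_ofReal_sub_one_sq (t : ℝ) :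
    ‖Complex.exp (Complex.I * t) - 1‖ₑ ^ 2 = ENNReal.ofReal (2 * (1 - cos t)) := by
  have hcos : cos t = 1 - 2 * sin (t / 2) ^ 2 := by
    rw [← cos_two_mul_eq_one_sub, mul_div_cancel₀ t two_ne_zero]
  rw [← ofReal_norm, ← ENNReal.ofReal_pow (norm_nonneg _),
    Complex.norm_exp_I_mul_ofReal_sub_one, Real.norm_eq_abs, sq_abs, hcos]
  ring_nf

lemma lintegral_pi_enorm_exp_sub_one_sq_mul_inv_le {ι : Type*} [Fintype ι] (μ : Measure ℝ)
    [SigmaFinite μ] (k : ι) :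
    ∫⁻ x, ‖Complex.exp (Complex.I * x k) - 1‖ₑ ^ 2 * ENNReal.ofReal (∑ l, (1 - cos (x l)))⁻¹
        ∂Measure.pi (fun _ => μ)
      ≤ 2 * (μ Set.univ ^ Fintype.card ι / Fintype.card ι) := by
  simp_rw [enorm_exp_I_mul_ofReal_sub_one_sq, ENNReal.ofReal_mul zero_le_two,
    ENNReal.ofReal_ofNat, mul_assoc]
  rw [lintegral_const_mul' _ _ ENNReal.ofNat_ne_top]
  gcongr
  exact lintegral_pi_ofReal_mul_ofReal_inv_sum_le μ (by fun_prop)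
    (fun t => sub_nonneg.2 (cos_le_one t)) k

lemma volume_restrict_Icc_pi_eq {ι : Type*} [Fintype ι] (a b : ℝ) :
    volume.restrict (Set.Icc (fun _ : ι => a) (fun _ => b)) =
      Measure.pi fun _ => volume.restrict (Set.Icc a b) := by
  rw [← Set.pi_univ_Icc, volume_pi, Measure.restrict_pi_pi]

theorem stmt_9_general
    (d n : ℕ) (k : Fin d)
    (D : (Fin d → ℝ) → ℝ) (hD : ∀ p, D p = ∑ l, (1 - Real.cos (p l)))
    (u : (Fin n → Fin d → ℝ) → ℂ) (hu : Measurable u) :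
    (∫⁻ p in Set.univ.pi
        (fun _ : Fin (n + 1) => Set.Icc (fun _ : Fin d => -π) (fun _ : Fin d => π)),
      (‖∑ m : Fin (n + 1),
            (Complex.exp (Complex.I * (p m k)) - 1) * u (p ∘ m.succAbove)‖₊ : ℝ≥0∞) ^ 2
        * ∏ m, ENNReal.ofReal (D (p m))⁻¹)
      ≤ ((n + 1 : ℕ) : ℝ≥0∞) ^ 2 * ENNReal.ofReal (2 * (2 * π) ^ d / d) *
        ∫⁻ p in Set.univ.pi
          (fun _ : Fin n => Set.Icc (fun _ : Fin d => -π) (fun _ : Fin d => π)),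
        (‖u p‖₊ : ℝ≥0∞) ^ 2 * ∏ m, ENNReal.ofReal (D (p m))⁻¹ := by
  obtain rfl : D = fun p => ∑ l, (1 - cos (p l)) := funext hD
  set μ : Measure ℝ := volume.restrict (Set.Icc (-π) π)
  have hbox (N : ℕ) : (volume : Measure (Fin N → Fin d → ℝ)).restrict
      (Set.univ.pi fun _ => Set.Icc (fun _ => -π) (fun _ => π)) =
        Measure.pi fun _ => Measure.pi fun _ => μ := by
    rw [volume_pi, Measure.restrict_pi_pi, volume_restrict_Icc_pi_eq]
  have hmass : 2 * (μ Set.univ ^ Fintype.card (Fin d) / Fintype.card (Fin d)) =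
      ENNReal.ofReal (2 * (2 * π) ^ d / d) := by
    rw [Measure.restrict_apply_univ, Real.volume_Icc, Fintype.card_fin, sub_neg_eq_add,
      ← two_mul, ← ENNReal.ofReal_pow (by positivity), ← ENNReal.ofReal_natCast,
      ← ENNReal.ofReal_div_of_pos (mod_cast k.pos), ← ENNReal.ofReal_ofNat 2,
      ← ENNReal.ofReal_mul zero_le_two, mul_div_assoc]
  rw [hbox, hbox, ← hmass]
  simp only [← enorm_eq_nnnorm]
  calc _ ≤ _ := lintegral_pi_enorm_sum_succAbove_sq_le _
        (e := fun x => Complex.exp (Complex.I * x k) - 1)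
        (w := fun x => ENNReal.ofReal (∑ l, (1 - cos (x l)))⁻¹) (by fun_prop) hu (by fun_prop)
    _ ≤ _ := by
        gcongr
        exact lintegral_pi_enorm_exp_sub_one_sq_mul_inv_le μ k

theorem stmt_9
    (d n : ℕ) (hd : 1 ≤ d) (k : Fin d)
    (D : (Fin d → ℝ) → ℝ) (hD : ∀ p, D p = ∑ l, (1 - Real.cos (p l)))
    (u : (Fin n → Fin d → ℝ) → ℂ) (hu : Measurable u) :
    (∫⁻ p in Set.univ.pi
        (fun _ : Fin (n + 1) => Set.Icc (fun _ : Fin d => -π) (fun _ : Fin d => π)),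
      (‖∑ m : Fin (n + 1),
            (Complex.exp (Complex.I * (p m k)) - 1) * u (p ∘ m.succAbove)‖₊ : ℝ≥0∞) ^ 2
        * ∏ m, ENNReal.ofReal (D (p m))⁻¹)
      ≤ ((n + 1 : ℕ) : ℝ≥0∞) ^ 2 * ENNReal.ofReal (2 * (2 * π) ^ d / d) *
        ∫⁻ p in Set.univ.pi
          (fun _ : Fin n => Set.Icc (fun _ : Fin d => -π) (fun _ : Fin d => π)),
        (‖u p‖₊ : ℝ≥0∞) ^ 2 * ∏ m, ENNReal.ofReal (D (p m))⁻¹ :=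
  stmt_9_general d n k D hD u hu
end

section
/- Let c > 0 and Z ≥ 0 be real constants, let d ≥ 1 be real, and let a, m : ℕ → [0,∞) be sequences with a(0) = 0, a(n) ≤ (cd)^{-1} n² a(n-1) + c^{-1} n² m(n-1)² for every n ≥ 1, and m(j) ≤ Z · 2^{j/2} · ⌊j/2⌋! · c^{-j/2} for every j ≥ 0. Then for every n ≥ 0, a(n) ≤ Z² · (n!)² · (2/c)^n. -/
/-! Induction on `n`: squaring the moment bound gives `m(k)² ≤ Z² (⌊k/2⌋!)² (2/c)^k ≤ Z² (k!)² (2/c)^k`,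
the same bound as the induction hypothesis for `a(k)`; since `d ≥ 1`, both terms of the recursion are
then at most `c⁻¹ (k+1)² Z² (k!)² (2/c)^k`, and their sum is exactly `Z² ((k+1)!)² (2/c)^(k+1)`. -/

theorem Real.rpow_half_natCast_sq {x : ℝ} (hx : 0 ≤ x) (k : ℕ) :
    (x ^ ((k : ℝ) / 2)) ^ 2 = x ^ k := by
  rw [← Real.rpow_mul_natCast hx, Nat.cast_two, div_mul_cancel₀ _ two_ne_zero, Real.rpow_natCast]

theorem moment_bound_sq {c : ℝ} (hc : 0 < c) (Z f : ℝ) (k : ℕ) :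
    (Z * (2 : ℝ) ^ ((k : ℝ) / 2) * f * c ^ (-(k : ℝ) / 2)) ^ 2 = Z ^ 2 * f ^ 2 * (2 / c) ^ k := by
  rw [neg_div, Real.rpow_neg hc.le, mul_pow, mul_pow, mul_pow, inv_pow,
    Real.rpow_half_natCast_sq zero_le_two, Real.rpow_half_natCast_sq hc.le, div_pow]
  ring

theorem sq_le_of_le_moment_bound {c Z x : ℝ} (hc : 0 < c) {k : ℕ} (hx : 0 ≤ x)
    (h : x ≤ Z * (2 : ℝ) ^ ((k : ℝ) / 2) * (Nat.factorial (k / 2) : ℝ) * c ^ (-(k : ℝ) / 2)) :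
    x ^ 2 ≤ Z ^ 2 * (Nat.factorial k : ℝ) ^ 2 * (2 / c) ^ k :=
  calc x ^ 2 ≤ (Z * (2 : ℝ) ^ ((k : ℝ) / 2) * (Nat.factorial (k / 2) : ℝ)
        * c ^ (-(k : ℝ) / 2)) ^ 2 := pow_le_pow_left₀ hx h 2
    _ = Z ^ 2 * (Nat.factorial (k / 2) : ℝ) ^ 2 * (2 / c) ^ k := moment_bound_sq hc _ _ _
    _ ≤ Z ^ 2 * (Nat.factorial k : ℝ) ^ 2 * (2 / c) ^ k := by
      gcongr
      exact Nat.div_le_self k 2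

theorem stmt_12_general
    (c Z d : ℝ) (hc : 0 < c) (hd : 1 ≤ d)
    (a m : ℕ → ℝ) (hm : ∀ n, 0 ≤ m n)
    (ha0 : a 0 = 0)
    (hrec : ∀ n, 1 ≤ n →
      a n ≤ (c * d)⁻¹ * n ^ 2 * a (n - 1) + c⁻¹ * n ^ 2 * m (n - 1) ^ 2)
    (hmom : ∀ j : ℕ,
      m j ≤ Z * (2 : ℝ) ^ ((j : ℝ) / 2) * (Nat.factorial (j / 2) : ℝ)
              * c ^ (-(j : ℝ) / 2)) :
    ∀ n : ℕ, a n ≤ Z ^ 2 * (Nat.factorial n : ℝ) ^ 2 * (2 / c) ^ n := by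
  intro n
  induction n with
  | zero => simp only [ha0, Nat.factorial_zero]; positivity
  | succ k ih =>
    set B := Z ^ 2 * (Nat.factorial k : ℝ) ^ 2 * (2 / c) ^ k
    have hB : 0 ≤ B := by positivity
    have hcd : (c * d)⁻¹ ≤ c⁻¹ := inv_anti₀ hc (le_mul_of_one_le_right hc.le hd)
    have hak : (c * d)⁻¹ * a k ≤ c⁻¹ * B :=
      (mul_le_mul_of_nonneg_left ih (by positivity)).trans (mul_le_mul_of_nonneg_right hcd hB)
    have hmk : m k ^ 2 ≤ B := sq_le_of_le_moment_bound hc (hm k) (hmom k)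
    calc a (k + 1)
        ≤ (c * d)⁻¹ * ((k : ℝ) + 1) ^ 2 * a k + c⁻¹ * ((k : ℝ) + 1) ^ 2 * m k ^ 2 := by
          simpa using hrec (k + 1) k.succ_pos
      _ ≤ c⁻¹ * ((k : ℝ) + 1) ^ 2 * B + c⁻¹ * ((k : ℝ) + 1) ^ 2 * B := by
          have hk : 0 ≤ ((k : ℝ) + 1) ^ 2 := by positivity
          linarith [mul_le_mul_of_nonneg_left hak hk,
            mul_le_mul_of_nonneg_left hmk (mul_nonneg (inv_nonneg.2 hc.le) hk)]
      _ = Z ^ 2 * (Nat.factorial (k + 1) : ℝ) ^ 2 * (2 / c) ^ (k + 1) := by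
          simp only [B, Nat.factorial_succ, pow_succ]
          push_cast
          field_simp
          ring

theorem stmt_12
    (c Z d : ℝ) (hc : 0 < c) (hZ : 0 ≤ Z) (hd : 1 ≤ d)
    (a m : ℕ → ℝ) (ha : ∀ n, 0 ≤ a n) (hm : ∀ n, 0 ≤ m n)
    (ha0 : a 0 = 0)
    (hrec : ∀ n, 1 ≤ n →
      a n ≤ (c * d)⁻¹ * n ^ 2 * a (n - 1) + c⁻¹ * n ^ 2 * m (n - 1) ^ 2)
    (hmom : ∀ j : ℕ,
      m j ≤ Z * (2 : ℝ) ^ ((j : ℝ) / 2) * (Nat.factorial (j / 2) : ℝ)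
              * c ^ (-(j : ℝ) / 2)) :
    ∀ n : ℕ, a n ≤ Z ^ 2 * (Nat.factorial n : ℝ) ^ 2 * (2 / c) ^ n :=
  stmt_12_general c Z d hc hd a m hm ha0 hrec hmom
end
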